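/- Let X be a complex vector space with dim X ≥ 2, let Y be a strictly convex complex normed space, Ω ⊂ X polygonally connected and 2-open, and f : Ω → Y Gâteaux holomorphic. If the function x ↦ ‖f(x)‖ has a local maximum at some point c in the topology whose open sets are the 1-open sets (sets whose intersection with every complex line is open), then f is constant on Ω. -/

import Mathlib

/-- `f : X → Y` is Gâteaux holomorphic on `Ω`: for every point of `Ω`, direction, and
continuous linear functional `φ` on `Y`, the map `λ ↦ φ (f (a + λ v))` is holomorphic
on some disc. -/
def GateauxHolomorphicOn {X : Type*} [AddCommGroup X] [Module ℂ X]
    {Y : Type*} [NormedAddCommGroup Y] [NormedSpace ℂ Y]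
    (f : X → Y) (Ω : Set X) : Prop :=
  ∀ a ∈ Ω, ∀ v : X, ∀ φ : Y →L[ℂ] ℂ, ∃ r > 0,
    DifferentiableOn ℂ (fun z : ℂ => φ (f (a + z • v))) (Metric.ball (0 : ℂ) r)

/-- `Ω` is 2-open. -/
def TwoOpen {X : Type*} [AddCommGroup X] [Module ℂ X] (Ω : Set X) : Prop :=
  ∀ a u v : X, IsOpen {p : ℂ × ℂ | a + p.1 • u + p.2 • v ∈ Ω}

/-- `Ω` is polygonally connected. -/
def PolygonallyConnected {X : Type*} [AddCommGroup X] [Module ℂ X] (Ω : Set X) : Prop :=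
  ∀ x ∈ Ω, ∀ y ∈ Ω, ∃ (m : ℕ) (p : ℕ → X), p 0 = x ∧ p m = y ∧
    ∀ i < m, ∀ t : ℝ, 0 ≤ t → t ≤ 1 →
      p i + (t : ℂ) • (p (i + 1) - p i) ∈ Ω

section aux
variable {X : Type*} [AddCommGroup X] [Module ℂ X]
    {Y : Type*} [NormedAddCommGroup Y] [NormedSpace ℂ Y]
    {Ω : Set X} {f : X → Y}

/-- Strict convexity: if a norm-one functional attains the max value on both `x` and `y`,
and `‖y‖ ≤ ‖x‖`, then `y = x`. -/
lemma strict_aux [StrictConvexSpace ℝ Y] {x y : Y} (φ : Y →L[ℂ] ℂ) (hφ : ‖φ‖ ≤ 1)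
    (hφx : φ x = (‖x‖ : ℂ)) (hφy : φ y = (‖x‖ : ℂ)) (hy : ‖y‖ ≤ ‖x‖) : y = x := by
  have key : ∀ w : Y, (‖(φ w : ℂ)‖) ≤ ‖w‖ := by
    intro w
    calc ‖(φ w : ℂ)‖ ≤ ‖φ‖ * ‖w‖ := φ.le_opNorm w
    _ ≤ 1 * ‖w‖ := by gcongr
    _ = ‖w‖ := one_mul _
  have hyx : ‖y‖ = ‖x‖ := by
    refine le_antisymm hy ?_
    have := key y
    rw [hφy] at this
    simpa using this
  have hsum : ‖y + x‖ = ‖y‖ + ‖x‖ := by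
    refine le_antisymm (norm_add_le _ _) ?_
    have := key (y + x)
    rw [map_add, hφx, hφy, ← Complex.ofReal_add] at this
    simp only [Complex.norm_real] at this
    rw [Real.norm_of_nonneg (by positivity)] at this
    rw [hyx]
    linarith
  exact eq_of_norm_eq_of_norm_add_eq hyx hsum

/-- A Gâteaux holomorphic function is, along each complex line, weakly analytic at
every point where the line lies in `Ω`. -/
lemma analyticAt_slice (hf : GateauxHolomorphicOn f Ω) (a d : X) (φ : Y →L[ℂ] ℂ)
    {z₀ : ℂ} (hz : a + z₀ • d ∈ Ω) :
    AnalyticAt ℂ (fun z : ℂ => φ (f (a + z • d))) z₀ := by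
  obtain ⟨r, hr, hdiff⟩ := hf (a + z₀ • d) hz d φ
  have hG : AnalyticAt ℂ (fun z : ℂ => φ (f (a + z₀ • d + z • d))) 0 :=
    hdiff.analyticAt (Metric.ball_mem_nhds _ hr)
  have hsub : AnalyticAt ℂ (fun z : ℂ => z - z₀) z₀ :=
    (analyticAt_id.sub analyticAt_const)
  have hz00 : z₀ - z₀ = 0 := sub_self z₀
  rw [← hz00] at hG
  have hcomp : AnalyticAt ℂ ((fun z : ℂ => φ (f (a + z₀ • d + z • d))) ∘ (fun z => z - z₀)) z₀ :=
    AnalyticAt.comp (f := fun z : ℂ => z - z₀) hG hsub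
  have heq : (fun z : ℂ => φ (f (a + z • d)))
      = (fun z : ℂ => φ (f (a + z₀ • d + z • d))) ∘ (fun z => z - z₀) := by
    funext z
    simp only [Function.comp_apply]
    congr 2
    rw [add_assoc, ← add_smul]
    ring_nf
  rw [heq]
  exact hcomp

/-- Identity-theorem propagation along a complex line. -/
lemma lemB (hf : GateauxHolomorphicOn f Ω) (a d : X) {T : Set ℂ}
    (hT : IsOpen T) (hTc : IsPreconnected T) (hTΩ : ∀ z ∈ T, a + z • d ∈ Ω)
    {y : Y} {r : ℝ} (hr : 0 < r) (h0 : ∀ z : ℂ, ‖z‖ < r → f (a + z • d) = y)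
    (h0T : (0 : ℂ) ∈ T) : ∀ z ∈ T, f (a + z • d) = y := by
  intro z hz
  rw [NormedSpace.eq_iff_forall_dual_eq ℂ]
  intro φ
  have han : AnalyticOnNhd ℂ (fun z : ℂ => φ (f (a + z • d))) T := fun w hw =>
    analyticAt_slice hf a d φ (hTΩ w hw)
  have hconst : AnalyticOnNhd ℂ (fun _ : ℂ => φ y) T := fun _ _ => analyticAt_const
  have hev : (fun z : ℂ => φ (f (a + z • d))) =ᶠ[nhds (0 : ℂ)] (fun _ => φ y) := by
    filter_upwards [Metric.ball_mem_nhds (0 : ℂ) hr] with w hw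
    rw [h0 w (by simpa using hw)]
  exact han.eqOn_of_preconnected_of_eventuallyEq hconst hTc h0T hev hz

end aux

section main
variable {X : Type*} [AddCommGroup X] [Module ℂ X]
    {Y : Type*} [NormedAddCommGroup Y] [NormedSpace ℂ Y]
    {Ω : Set X} {f : X → Y}

/-- If `f = y` on a disc around `a` in every direction, then `f = y` on a whole
"bidisc" in any two given directions. -/
lemma bidisc (hf : GateauxHolomorphicOn f Ω) (hΩ2 : TwoOpen Ω) {a : X} (ha : a ∈ Ω)
    {y : Y} (hA : ∀ d : X, ∃ r > 0, ∀ z : ℂ, ‖z‖ < r → f (a + z • d) = y) (u v : X) :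
    ∃ δ > 0, ∀ z w : ℂ, ‖z‖ < δ → ‖w‖ < δ → f (a + z • u + w • v) = y := by
  have hW := hΩ2 a u v
  have h00 : ((0, 0) : ℂ × ℂ) ∈ {p : ℂ × ℂ | a + p.1 • u + p.2 • v ∈ Ω} := by simpa using ha
  obtain ⟨δ, hδ, hball⟩ := Metric.isOpen_iff.1 hW _ h00
  refine ⟨δ, hδ, fun z w hz hw => ?_⟩
  set d := z • u + w • v with hd
  have hmem : ∀ ζ : ℂ, ‖ζ‖ ≤ 1 → a + ζ • d ∈ Ω := by
    intro ζ hζ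
    have h1 : ((ζ * z, ζ * w) : ℂ × ℂ) ∈ Metric.ball ((0, 0) : ℂ × ℂ) δ := by
      rw [Metric.mem_ball, Prod.dist_eq]
      apply max_lt
      · rw [dist_zero_right, norm_mul]
        calc ‖ζ‖ * ‖z‖ ≤ 1 * ‖z‖ := mul_le_mul_of_nonneg_right hζ (norm_nonneg _)
        _ = ‖z‖ := one_mul _
        _ < δ := hz
      · rw [dist_zero_right, norm_mul]
        calc ‖ζ‖ * ‖w‖ ≤ 1 * ‖w‖ := mul_le_mul_of_nonneg_right hζ (norm_nonneg _)
        _ = ‖w‖ := one_mul _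
        _ < δ := hw
    have := hball h1
    simpa [hd, smul_add, smul_smul, add_assoc] using this
  have hSopen : IsOpen {ζ : ℂ | a + ζ • d ∈ Ω} := by
    have heq : {ζ : ℂ | a + ζ • d ∈ Ω}
        = (fun ζ : ℂ => ((ζ * z, ζ * w) : ℂ × ℂ)) ⁻¹'
          {p : ℂ × ℂ | a + p.1 • u + p.2 • v ∈ Ω} := by
      ext ζ
      simp [hd, smul_add, smul_smul, add_assoc]
    rw [heq]
    exact hW.preimage (by fun_prop)
  have hSsub : Metric.closedBall (0 : ℂ) 1 ⊆ {ζ : ℂ | a + ζ • d ∈ Ω} := by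
    intro ζ hζ
    exact hmem ζ (by simpa using hζ)
  obtain ⟨η, hη, hth⟩ := (isCompact_closedBall (0 : ℂ) 1).exists_thickening_subset_open
    hSopen hSsub
  have hTsub : ∀ ζ ∈ Metric.ball (0 : ℂ) (η + 1), a + ζ • d ∈ Ω := by
    intro ζ hζ
    apply hth
    rw [thickening_closedBall hη zero_le_one]
    exact hζ
  obtain ⟨r, hr, hfr⟩ := hA d
  have h1 := lemB hf a d Metric.isOpen_ball (convex_ball _ _).isPreconnected hTsub hr hfr
    (by simp [Metric.mem_ball]; positivity) 1 (by
      simp only [Metric.mem_ball, dist_zero_right, norm_one]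
      linarith)
  have : a + (1 : ℂ) • d = a + z • u + w • v := by rw [one_smul, hd, add_assoc]
  rwa [this] at h1

/-- Propagation of the "constant on a disc in every direction" property along a segment. -/
lemma propagate (hf : GateauxHolomorphicOn f Ω) (hΩ2 : TwoOpen Ω) {a : X} (ha : a ∈ Ω)
    (b : X) (hseg : ∀ t : ℝ, 0 ≤ t → t ≤ 1 → a + (t : ℂ) • (b - a) ∈ Ω)
    {y : Y} (hA : ∀ d : X, ∃ r > 0, ∀ z : ℂ, ‖z‖ < r → f (a + z • d) = y) :
    ∀ d : X, ∃ r > 0, ∀ z : ℂ, ‖z‖ < r → f (b + z • d) = y := by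
  intro v
  set u := b - a with hu
  have hW := hΩ2 a u v
  set K : Set (ℂ × ℂ) := (fun t : ℝ => (((t : ℂ), (0 : ℂ)) : ℂ × ℂ)) '' Set.Icc 0 1 with hK
  have hKcomp : IsCompact K := isCompact_Icc.image (by fun_prop)
  have hKsub : K ⊆ {p : ℂ × ℂ | a + p.1 • u + p.2 • v ∈ Ω} := by
    rintro _ ⟨t, ht, rfl⟩
    simpa using hseg t ht.1 ht.2
  obtain ⟨ε, hε, hth⟩ := hKcomp.exists_thickening_subset_open hW hKsub
  obtain ⟨δ, hδ, hbd⟩ := bidisc hf hΩ2 ha hA u v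
  refine ⟨min δ ε, lt_min hδ hε, fun w hw => ?_⟩
  have hwδ : ‖w‖ < δ := lt_of_lt_of_le hw (min_le_left _ _)
  have hwε : ‖w‖ < ε := lt_of_lt_of_le hw (min_le_right _ _)
  set I : Set ℂ := (fun t : ℝ => (t : ℂ)) '' Set.Icc 0 1 with hI
  set T : Set ℂ := Metric.thickening ε I with hT
  have hTopen : IsOpen T := Metric.isOpen_thickening
  have hTconv : Convex ℝ T := by
    refine Convex.thickening ?_ ε
    have himg : I = Complex.ofRealCLM.toLinearMap '' Set.Icc (0:ℝ) 1 := by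
      rw [hI]; rfl
    rw [himg]
    exact (convex_Icc (0:ℝ) 1).linear_image _
  have hTΩ : ∀ ζ ∈ T, (a + w • v) + ζ • u ∈ Ω := by
    intro ζ hζ
    rw [hT, Metric.mem_thickening_iff] at hζ
    obtain ⟨_, ⟨t, ht, rfl⟩, hdist⟩ := hζ
    have hmem : ((ζ, w) : ℂ × ℂ) ∈ Metric.thickening ε K := by
      rw [Metric.mem_thickening_iff]
      refine ⟨((t : ℂ), (0 : ℂ)), ⟨t, ht, rfl⟩, ?_⟩
      rw [Prod.dist_eq]
      apply max_lt hdist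
      simpa using hwε
    have := hth hmem
    have hre : a + ζ • u + w • v = (a + w • v) + ζ • u := by abel
    rw [← hre]
    exact this
  have hnear : ∀ ζ : ℂ, ‖ζ‖ < δ → f ((a + w • v) + ζ • u) = y := by
    intro ζ hζ
    have := hbd ζ w hζ hwδ
    have hre : a + ζ • u + w • v = (a + w • v) + ζ • u := by abel
    rwa [hre] at this
  have h0T : (0 : ℂ) ∈ T := by
    rw [hT, Metric.mem_thickening_iff]
    exact ⟨0, ⟨0, by simp, by simp⟩, by simpa using hε⟩
  have h1T : (1 : ℂ) ∈ T := by
    rw [hT, Metric.mem_thickening_iff]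
    exact ⟨1, ⟨1, by simp, by simp⟩, by simpa using hε⟩
  have h1 := lemB hf (a + w • v) u hTopen hTconv.isPreconnected hTΩ hδ hnear h0T 1 h1T
  have : (a + w • v) + (1 : ℂ) • u = b + w • v := by rw [one_smul, hu]; abel
  rwa [this] at h1

end main

theorem maximum_norm_principle {X : Type*} [AddCommGroup X] [Module ℂ X]
    (hdim : 2 ≤ Module.rank ℂ X)
    {Y : Type*} [NormedAddCommGroup Y] [NormedSpace ℂ Y] [StrictConvexSpace ℝ Y]
    (Ω : Set X) (hΩ2 : TwoOpen Ω) (hΩconn : PolygonallyConnected Ω)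
    (f : X → Y) (hf : GateauxHolomorphicOn f Ω)
    (c : X) (C : Set X) (hCΩ : C ⊆ Ω) (hcC : c ∈ C)
    (hC1 : ∀ u : X, ∃ r > 0, ∀ z : ℂ, ‖z‖ < r → c + z • u ∈ C)
    (hmax : ∀ x ∈ C, ‖f x‖ ≤ ‖f c‖) :
    ∀ x ∈ Ω, f x = f c := by
  have hcΩ : c ∈ Ω := hCΩ hcC
  -- Step A: `f = f c` on a disc around `c` in every direction.
  have hA : ∀ d : X, ∃ r > 0, ∀ z : ℂ, ‖z‖ < r → f (c + z • d) = f c := by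
    by_cases hfc : f c = 0
    · intro d
      obtain ⟨r, hr, hrC⟩ := hC1 d
      refine ⟨r, hr, fun z hz => ?_⟩
      have h1 := hmax _ (hrC z hz)
      rw [hfc, norm_zero] at h1
      rw [hfc]
      exact norm_le_zero_iff.1 h1
    · obtain ⟨φ, hφ1, hφc⟩ := exists_dual_vector ℂ (f c) (norm_ne_zero_iff.2 hfc)
      intro d
      obtain ⟨r₁, hr₁, hrC⟩ := hC1 d
      obtain ⟨r₂, hr₂, hdiff⟩ := hf c hcΩ d φ
      set ρ := min r₁ r₂ with hρdef
      have hρ : 0 < ρ := lt_min hr₁ hr₂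
      have hmemC : ∀ z ∈ Metric.ball (0 : ℂ) ρ, c + z • d ∈ C := by
        intro z hz
        rw [Metric.mem_ball, dist_zero_right] at hz
        exact hrC z (lt_of_lt_of_le hz (min_le_left _ _))
      have hmaxon : IsMaxOn (norm ∘ fun z : ℂ => φ (f (c + z • d)))
          (Metric.ball (0 : ℂ) ρ) 0 := by
        rw [isMaxOn_iff]
        intro z hz
        simp only [Function.comp_apply]
        calc ‖φ (f (c + z • d))‖ ≤ ‖φ‖ * ‖f (c + z • d)‖ := φ.le_opNorm _
        _ = ‖f (c + z • d)‖ := by rw [hφ1, one_mul]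
        _ ≤ ‖f c‖ := hmax _ (hmemC z hz)
        _ = ‖φ (f (c + (0 : ℂ) • d))‖ := by
            rw [zero_smul, add_zero, hφc]
            simp
      have heq := Complex.eqOn_of_isPreconnected_of_isMaxOn_norm
        (convex_ball (0 : ℂ) ρ).isPreconnected Metric.isOpen_ball
        (hdiff.mono (Metric.ball_subset_ball (min_le_right _ _)))
        (Metric.mem_ball_self hρ) hmaxon
      refine ⟨ρ, hρ, fun z hz => ?_⟩
      have hz' : z ∈ Metric.ball (0 : ℂ) ρ := by
        rw [Metric.mem_ball, dist_zero_right]; exact hz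
      have hval := heq hz'
      simp only [Function.const_apply] at hval
      have hval' : φ (f (c + z • d)) = (‖f c‖ : ℂ) := by
        rw [hval, zero_smul, add_zero, hφc]
        rfl
      exact strict_aux φ (le_of_eq hφ1) hφc hval' (hmax _ (hmemC z hz'))
  -- propagate along the polygon
  intro x hx
  obtain ⟨m, p, hp0, hpm, hpseg⟩ := hΩconn c hcΩ x hx
  have hmem : ∀ i ≤ m, p i ∈ Ω := by
    intro i hi
    rcases eq_or_lt_of_le hi with rfl | hlt
    · rwa [hpm]
    · simpa using hpseg i hlt 0 le_rfl zero_le_one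
  have hgood : ∀ i ≤ m, ∀ d : X, ∃ r > 0, ∀ z : ℂ, ‖z‖ < r → f (p i + z • d) = f c := by
    intro i
    induction i with
    | zero => intro _; rw [hp0]; exact hA
    | succ n ih =>
      intro hn
      have hn' : n < m := hn
      exact propagate hf hΩ2 (hmem n hn'.le) (p (n + 1))
        (fun t ht0 ht1 => hpseg n hn' t ht0 ht1) (ih hn'.le)
  obtain ⟨r, hr, h⟩ := hgood m le_rfl 0
  have h2 := h 0 (by simpa using hr)
  rw [zero_smul, add_zero, hpm] at h2
  exact h2
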